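/- arXiv:2604.27124 — 2 statements merged into one kernel-verified Lean document; each statement's English description precedes it below -/
import Mathlib

section
/- The softmax function on ℝⁿ is 1-Lipschitz with respect to the Euclidean norm: for all a, b ∈ ℝⁿ, ‖softmax(a) - softmax(b)‖₂ ≤ ‖a - b‖₂. -/
noncomputable def softmax {n : ℕ} (a : Fin n → ℝ) (j : Fin n) : ℝ :=
  Real.exp (a j) / ∑ i, Real.exp (a i)

/-!
The Jacobian of softmax at `a` is `diag p - p pᵀ` with `p = softmax a`. For a probability
vector `p` and `m = ⟨p, v⟩`, the `j`-th entry of `(diag p - p pᵀ) v` is `p_j (v_j - m)`, and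
`∑ p_j² (v_j - m)² ≤ ∑ p_j (v_j - m)² = ∑ p_j v_j² - m² ≤ ∑ v_j²` since `p_j ≤ 1`.
So the Jacobian has operator norm at most `1`, and the mean value inequality makes softmax
`1`-Lipschitz on Euclidean space.
-/

open Finset Matrix WithLp Real

section ProbabilityVector

variable {ι : Type*} [Fintype ι] {p : ι → ℝ}

theorem sum_sq_mul_sub_le (hp : ∀ i, 0 ≤ p i) (hp1 : ∑ i, p i = 1) (v : ι → ℝ) :
    ∑ j, (p j * (v j - ∑ i, p i * v i)) ^ 2 ≤ ∑ j, v j ^ 2 := by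
  set m := ∑ i, p i * v i
  have hle : ∀ j, p j ≤ 1 := fun j => hp1 ▸ single_le_sum (fun i _ => hp i) (mem_univ j)
  have hvar : ∑ j, p j * (v j - m) ^ 2 = ∑ j, p j * v j ^ 2 - m ^ 2 := by
    have h : ∀ j, p j * (v j - m) ^ 2 = p j * v j ^ 2 - 2 * m * (p j * v j) + m ^ 2 * p j :=
      fun j => by ring
    simp only [h, sum_add_distrib, sum_sub_distrib, ← mul_sum, hp1]
    ring
  calc ∑ j, (p j * (v j - m)) ^ 2 ≤ ∑ j, p j * (v j - m) ^ 2 := by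
        gcongr with j
        rw [mul_pow, sq (p j), mul_assoc]
        exact mul_le_of_le_one_left (mul_nonneg (hp j) (sq_nonneg _)) (hle j)
    _ ≤ ∑ j, p j * v j ^ 2 := by rw [hvar]; linarith [sq_nonneg m]
    _ ≤ ∑ j, v j ^ 2 := by
        gcongr with j
        exact mul_le_of_le_one_left (sq_nonneg _) (hle j)

variable [DecidableEq ι]

def softmaxJacobian (p : ι → ℝ) : Matrix ι ι ℝ :=
  diagonal p - vecMulVec p p

theorem softmaxJacobian_mulVec (p v : ι → ℝ) (j : ι) :
    (softmaxJacobian p *ᵥ v) j = p j * (v j - ∑ i, p i * v i) := by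
  simp [softmaxJacobian, sub_mulVec, mulVec_diagonal, vecMulVec_mulVec, dotProduct, mul_sub,
    mul_comm]

theorem norm_toEuclideanCLM_softmaxJacobian_le_one (hp : ∀ i, 0 ≤ p i)
    (hp1 : ∑ i, p i = 1) :
    ‖toEuclideanCLM (𝕜 := ℝ) (softmaxJacobian p)‖ ≤ 1 := by
  refine ContinuousLinearMap.opNorm_le_bound _ zero_le_one fun v => ?_
  rw [one_mul, ← sq_le_sq₀ (norm_nonneg _) (norm_nonneg _), EuclideanSpace.real_norm_sq_eq,
    EuclideanSpace.real_norm_sq_eq]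
  simpa only [ofLp_toEuclideanCLM, softmaxJacobian_mulVec] using
    sum_sq_mul_sub_le hp hp1 v.ofLp

end ProbabilityVector

variable {n : ℕ}

theorem sum_exp_pos [NeZero n] (a : Fin n → ℝ) : 0 < ∑ i, exp (a i) :=
  sum_pos (fun i _ => exp_pos (a i)) univ_nonempty

theorem softmax_nonneg (a : Fin n → ℝ) (j : Fin n) : 0 ≤ softmax a j := by
  unfold softmax; positivity

theorem sum_softmax [NeZero n] (a : Fin n → ℝ) : ∑ j, softmax a j = 1 := by
  simp only [softmax, ← sum_div, div_self (sum_exp_pos a).ne']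

theorem hasFDerivAt_softmax [NeZero n] (x : EuclideanSpace ℝ (Fin n)) :
    HasFDerivAt (fun y : EuclideanSpace ℝ (Fin n) => toLp 2 (softmax y.ofLp))
      (toEuclideanCLM (𝕜 := ℝ) (softmaxJacobian (softmax x.ofLp))) x := by
  refine hasFDerivWithinAt_univ.mp <| (hasFDerivWithinAt_piLp 2).mpr fun j => ?_
  have hexp (i : Fin n) := (PiLp.hasFDerivAt_apply (𝕜 := ℝ) 2 x i).exp
  have hS := (hasDerivAt_inv (sum_exp_pos x.ofLp).ne').comp_hasFDerivAt x
    (HasFDerivAt.fun_sum fun i _ => hexp i)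
  have h := (hexp j).mul hS
  simp only [Function.comp_def] at h
  refine (h.congr_fderiv ?_).hasFDerivWithinAt
  ext v
  simp only [ContinuousLinearMap.comp_apply, PiLp.proj_apply, ofLp_toEuclideanCLM,
    softmaxJacobian_mulVec]
  have hS0 := (sum_exp_pos x.ofLp).ne'
  simp only [_root_.add_apply, _root_.smul_apply, _root_.neg_apply, _root_.sum_apply,
    PiLp.proj_apply, neg_smul, smul_eq_mul, softmax, div_mul_eq_mul_div, ← sum_div]
  field_simp
  ring

theorem lipschitzWith_softmax :
    LipschitzWith 1 fun x : EuclideanSpace ℝ (Fin n) => toLp 2 (softmax x.ofLp) := by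
  rcases eq_or_ne n 0 with rfl | hn
  · exact LipschitzWith.of_dist_le_mul fun x y => by simp [Subsingleton.elim x y]
  have := NeZero.mk hn
  refine lipschitzWith_of_nnnorm_fderiv_le (fun x => (hasFDerivAt_softmax x).differentiableAt)
    fun x => ?_
  rw [(hasFDerivAt_softmax x).fderiv, ← NNReal.coe_le_coe, coe_nnnorm, NNReal.coe_one]
  exact norm_toEuclideanCLM_softmaxJacobian_le_one (softmax_nonneg _) (sum_softmax _)

theorem softmax_one_lipschitz {n : ℕ} (a b : Fin n → ℝ) :
    Real.sqrt (∑ j, (softmax a j - softmax b j) ^ 2) ≤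
    Real.sqrt (∑ j, (a j - b j) ^ 2) := by
  simpa [EuclideanSpace.dist_eq, Real.dist_eq, sq_abs] using
    lipschitzWith_softmax.dist_le_mul (toLp 2 a) (toLp 2 b)
end

section
/- For a, b ∈ ℝⁿ, ‖softmax(a) - softmax(b)‖₁ ≤ 2(e^{‖a-b‖_∞} - 1); in particular, the softmax map has local Lipschitz behavior that grows at most exponentially in the sup-norm perturbation. -/
private lemma exp_abs_sub_le {x y d : ℝ} (h1 : x - y ≤ d) (h2 : y - x ≤ d) :
    |Real.exp x - Real.exp y| ≤ (Real.exp d - 1) * Real.exp x := by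
  have hu := Real.exp_pos x
  have hv := Real.exp_pos y
  have hd : (0:ℝ) ≤ d := by cases le_total x y <;> linarith
  have ht : 1 ≤ Real.exp d := Real.one_le_exp hd
  have htp := Real.exp_pos d
  have huv : Real.exp x ≤ Real.exp y * Real.exp d := by
    rw [← Real.exp_add]; exact Real.exp_le_exp.2 (by linarith)
  have hvu : Real.exp y ≤ Real.exp x * Real.exp d := by
    rw [← Real.exp_add]; exact Real.exp_le_exp.2 (by linarith)
  rw [abs_sub_le_iff]
  constructor
  · nlinarith [mul_nonneg hu.le (sq_nonneg (Real.exp d - 1))]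
  · nlinarith

theorem softmax_l1_exp_bound {n : ℕ} (a b : Fin n → ℝ) :
    ∑ j, |softmax a j - softmax b j| ≤
    2 * (Real.exp (⨆ i, |a i - b i|) - 1) := by
  rcases Nat.eq_zero_or_pos n with hn | hn
  · subst hn
    rw [iSup_of_empty', Real.sSup_empty]
    simp
  haveI : Nonempty (Fin n) := Fin.pos_iff_nonempty.mp hn
  set d := ⨆ i, |a i - b i| with hd
  have hdle : ∀ i, |a i - b i| ≤ d := fun i =>
    le_ciSup (f := fun i => |a i - b i|) (Set.Finite.bddAbove (Set.finite_range _)) i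
  set Sa := ∑ i, Real.exp (a i) with hSa
  set Sb := ∑ i, Real.exp (b i) with hSb
  have hSap : 0 < Sa := Finset.sum_pos (fun i _ => Real.exp_pos _) Finset.univ_nonempty
  have hSbp : 0 < Sb := Finset.sum_pos (fun i _ => Real.exp_pos _) Finset.univ_nonempty
  have hE : Real.exp d - 1 ≥ 0 := by
    have : 1 ≤ Real.exp d := Real.one_le_exp (le_trans (abs_nonneg _) (hdle (Classical.arbitrary _)))
    linarith
  have hexp : ∀ j, |Real.exp (a j) - Real.exp (b j)| ≤ (Real.exp d - 1) * Real.exp (a j) := by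
    intro j
    have := hdle j
    rw [abs_le] at this
    exact exp_abs_sub_le (by linarith [this.2]) (by linarith [this.1])
  have hS : |Sb - Sa| ≤ (Real.exp d - 1) * Sa := by
    have h1 : |Sb - Sa| ≤ ∑ j, |Real.exp (a j) - Real.exp (b j)| := by
      rw [hSa, hSb, ← Finset.sum_sub_distrib]
      calc |∑ j, (Real.exp (b j) - Real.exp (a j))| ≤ ∑ j, |Real.exp (b j) - Real.exp (a j)| :=
            Finset.abs_sum_le_sum_abs _ _
        _ = ∑ j, |Real.exp (a j) - Real.exp (b j)| := by simp [abs_sub_comm]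
    calc |Sb - Sa| ≤ ∑ j, |Real.exp (a j) - Real.exp (b j)| := h1
      _ ≤ ∑ j, (Real.exp d - 1) * Real.exp (a j) :=
          Finset.sum_le_sum (fun j _ => hexp j)
      _ = (Real.exp d - 1) * Sa := by rw [← Finset.mul_sum]
  have hpt : ∀ j, |softmax a j - softmax b j| ≤
      (Real.exp d - 1) * (Real.exp (a j) / Sa) + (Real.exp d - 1) * (Real.exp (b j) / Sb) := by
    intro j
    have hkey : softmax a j - softmax b j =
        (Real.exp (a j) - Real.exp (b j)) / Sa + (Real.exp (b j) / Sb) * ((Sb - Sa) / Sa) := by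
      unfold softmax
      rw [← hSa, ← hSb]
      field_simp
      ring
    rw [hkey]
    calc |(Real.exp (a j) - Real.exp (b j)) / Sa + (Real.exp (b j) / Sb) * ((Sb - Sa) / Sa)|
        ≤ |(Real.exp (a j) - Real.exp (b j)) / Sa| + |(Real.exp (b j) / Sb) * ((Sb - Sa) / Sa)| :=
          abs_add_le _ _
      _ = |Real.exp (a j) - Real.exp (b j)| / Sa + (Real.exp (b j) / Sb) * (|Sb - Sa| / Sa) := by
          simp [abs_div, abs_mul, abs_of_pos hSap, abs_of_pos hSbp,
            abs_of_pos (Real.exp_pos (a j)), abs_of_pos (Real.exp_pos (b j))]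
      _ ≤ ((Real.exp d - 1) * Real.exp (a j)) / Sa +
            (Real.exp (b j) / Sb) * (((Real.exp d - 1) * Sa) / Sa) := by
          gcongr
          all_goals first | exact hexp j | exact hS | exact Or.inl trivial
      _ = (Real.exp d - 1) * (Real.exp (a j) / Sa) + (Real.exp d - 1) * (Real.exp (b j) / Sb) := by
          rw [mul_div_assoc, mul_div_cancel_right₀ _ hSap.ne']
          ring
  calc ∑ j, |softmax a j - softmax b j|
      ≤ ∑ j, ((Real.exp d - 1) * (Real.exp (a j) / Sa) + (Real.exp d - 1) * (Real.exp (b j) / Sb)) :=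
        Finset.sum_le_sum (fun j _ => hpt j)
    _ = (Real.exp d - 1) * (Sa / Sa) + (Real.exp d - 1) * (Sb / Sb) := by
        rw [Finset.sum_add_distrib, ← Finset.mul_sum, ← Finset.mul_sum, ← Finset.sum_div,
          ← Finset.sum_div]
    _ = 2 * (Real.exp d - 1) := by
        rw [div_self hSap.ne', div_self hSbp.ne']; ring
end
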